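/- arXiv:1507.07197 — 2 statements merged into one kernel-verified Lean document; each statement's English description precedes it below -/
import Mathlib

section
/- The Petersen graph is hypohamiltonian: it has no Hamiltonian cycle, but for every vertex v, the graph obtained by deleting v has a Hamiltonian cycle. -/
/-- A graph is hamiltonian if it contains a Hamiltonian cycle. -/
def IsHamiltonianGraph {V : Type*} [DecidableEq V] (G : SimpleGraph V) : Prop :=
  ∃ (a : V) (p : G.Walk a a), p.IsHamiltonianCycle

/-- A graph is hypohamiltonian if it is not hamiltonian but deleting any
vertex yields a hamiltonian graph. -/
def Hypohamiltonian {V : Type*} [DecidableEq V] (G : SimpleGraph V) : Prop :=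
  Nonempty V ∧ ¬ IsHamiltonianGraph G ∧
    ∀ v : V, IsHamiltonianGraph (G.induce ({v}ᶜ : Set V))

/-- The Petersen graph as the Kneser graph K(5,2). -/
def petersenGraph : SimpleGraph {s : Finset (Fin 5) // s.card = 2} where
  Adj a b := Disjoint (a : Finset (Fin 5)) (b : Finset (Fin 5))
  symm := ⟨fun a b h => h.symm⟩
  loopless := ⟨fun a h => by
    have hempty := disjoint_self.mp h
    have h2 := a.2
    rw [hempty] at h2
    simp at h2⟩

/-! Permutations of `Fin 5` act on 2-subsets by graph automorphisms of the Petersen graph, and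
transitively, so all vertex-deleted subgraphs are isomorphic: one 9-cycle avoiding `{3, 4}` makes
each of them Hamiltonian. A Hamiltonian cycle can be rotated to start at `{0, 1}`, so
non-Hamiltonicity follows from an exhaustive depth-first search from that single vertex. -/

namespace SimpleGraph

variable {V W : Type*} [DecidableEq V] [DecidableEq W] {G : SimpleGraph V} {H : SimpleGraph W}

theorem Iso.isHamiltonianGraph (e : G ≃g H) : IsHamiltonianGraph G → IsHamiltonianGraph H
  | ⟨a, p, hp⟩ => ⟨e a, p.map e.toHom, hp.map e.bijective⟩

theorem isHamiltonianGraph_induce_compl_singleton_of_forall_iso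
    (htrans : ∀ v w : V, ∃ e : G ≃g G, e v = w) {v : V}
    (hv : IsHamiltonianGraph (G.induce {v}ᶜ)) (w : V) :
    IsHamiltonianGraph (G.induce {w}ᶜ) := by
  obtain ⟨e, rfl⟩ := htrans v w
  exact (e.induce ((Set.bijOn_singleton.2 rfl).compl e.bijective)).isHamiltonianGraph hv

theorem Walk.IsCycle.isHamiltonianGraph_induce_compl_singleton {a v : V} {p : G.Walk a a}
    (hp : p.IsCycle) (hsupp : ∀ x, x ∈ p.support ↔ x ≠ v) :
    IsHamiltonianGraph (G.induce {v}ᶜ) := by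
  have hsub : ∀ x ∈ p.support, x ∈ ({v}ᶜ : Set V) := fun x hx => (hsupp x).1 hx
  set q := p.induce {v}ᶜ hsub
  have hq : q.IsCycle := .of_map (f := (Embedding.induce _).toHom) (by rwa [Walk.map_induce])
  refine ⟨_, q, Walk.isHamiltonianCycle_isCycle_and_isHamiltonian_tail.2 ⟨hq, ?_⟩⟩
  refine hq.isPath_tail.isHamiltonian_of_mem fun x => ?_
  have hx : x ∈ q.support := by
    simpa [q] using (hsupp x).2 x.2
  rw [Walk.support_tail_of_not_nil _ hq.not_nil]
  obtain rfl | hx := (Walk.mem_support_iff q).1 hx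
  · exact Walk.end_mem_tail_support hq.not_nil
  · exact hx

section Search

variable (G) [DecidableRel G.Adj]

/-- Whether the vertices of `rem` can be ordered as `v₁, …, vₖ` so that `u, v₁, …, vₖ, a` is a
walk in `G`. The fuel `n` must be `rem.length`; any other value gives `false`. -/
def searchPathThrough (a : V) : ℕ → List V → V → Bool
  | 0, rem, u => rem.isEmpty && decide (G.Adj u a)
  | n + 1, rem, u => rem.any fun v => decide (G.Adj u v) && searchPathThrough a n (rem.erase v) v

variable {G}

theorem Walk.searchPathThrough_eq_true {u a : V} (q : G.Walk u a) {rem : List V} (ha : a ∉ rem)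
    (hq : q.support.tail.Perm (a :: rem)) : G.searchPathThrough a rem.length rem u = true := by
  induction q generalizing rem with
  | nil => simpa using hq.length_eq
  | @cons _ v a huv q ih =>
    cases q with
    | nil =>
      obtain rfl : rem = [] := by simpa using hq.length_eq
      simpa [searchPathThrough] using huv
    | cons _ q' =>
      have hq' : (v :: q'.support).Perm (a :: rem) := by simpa using hq
      have hva : v ≠ a := by
        rintro rfl
        exact ha ((List.perm_cons v).1 hq' |>.subset q'.end_mem_support)
      have hv : v ∈ rem := by simpa [hva] using hq'.subset List.mem_cons_self
      have hrem : q'.support.Perm (a :: rem.erase v) := by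
        refine (List.perm_cons v).1 (hq'.trans ?_)
        exact ((List.perm_cons_erase hv).cons a).trans (List.Perm.swap v a _)
      rw [← List.length_erase_add_one hv, searchPathThrough, List.any_eq_true]
      exact ⟨v, hv, by
        simpa [huv] using ih (fun h => ha (List.mem_of_mem_erase h)) (by simpa using hrem)⟩

theorem not_isHamiltonianGraph_of_searchPathThrough {a : V} {rem : List V} (hrem : rem.Nodup)
    (hmem : ∀ x, x ∈ rem ↔ x ≠ a) (hsearch : G.searchPathThrough a rem.length rem a = false) :
    ¬ IsHamiltonianGraph G := by
  rintro ⟨b, p, hp⟩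
  set q := p.rotate a (hp.mem_support a)
  have hq : q.IsHamiltonianCycle := hp.rotate _
  have hperm : q.support.tail.Perm (a :: rem) := by
    refine (List.perm_ext_iff_of_nodup hq.isCycle.support_nodup
      (List.nodup_cons.2 ⟨fun h => (hmem a).1 h rfl, hrem⟩)).2 fun x => ?_
    have hx : x ∈ q.support.tail :=
      q.support_tail_of_not_nil hq.not_nil ▸ hq.isHamiltonian_tail.mem_support x
    simp only [hx, List.mem_cons, hmem, true_iff]
    exact eq_or_ne x a
  simpa [hsearch] using q.searchPathThrough_eq_true (fun h => (hmem a).1 h rfl) hperm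

end Search

end SimpleGraph

open SimpleGraph

instance : DecidableRel petersenGraph.Adj := fun a b =>
  inferInstanceAs (Decidable (Disjoint (a : Finset (Fin 5)) b))

def petersenVertex (a b : Fin 5) (hab : a ≠ b := by decide) :
    {s : Finset (Fin 5) // s.card = 2} :=
  ⟨{a, b}, Finset.card_pair hab⟩

def petersenPermIso (σ : Equiv.Perm (Fin 5)) : petersenGraph ≃g petersenGraph where
  toEquiv := σ.finsetCongr.subtypeEquiv fun s => by simp
  map_rel_iff' := Finset.disjoint_map _

theorem petersenGraph_exists_iso_apply_eq (v w : {s : Finset (Fin 5) // s.card = 2}) :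
    ∃ e : petersenGraph ≃g petersenGraph, e v = w := by
  obtain ⟨σ, hσ⟩ := (Set.powersetCard.isPretransitive (α := Fin 5) (n := 2)).exists_smul_eq
    ⟨v.1, by simpa using v.2⟩ ⟨w.1, by simpa using w.2⟩
  refine ⟨petersenPermIso σ, Subtype.ext ?_⟩
  show v.1.map σ.toEmbedding = w.1
  simpa [Finset.map_eq_image, Finset.smul_finset_def] using congrArg Subtype.val hσ

def petersenNineCycle : petersenGraph.Walk (petersenVertex 0 1) (petersenVertex 0 1) :=
  .cons (v := petersenVertex 2 3) (by decide) <|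
  .cons (v := petersenVertex 0 4) (by decide) <|
  .cons (v := petersenVertex 1 2) (by decide) <|
  .cons (v := petersenVertex 0 3) (by decide) <|
  .cons (v := petersenVertex 1 4) (by decide) <|
  .cons (v := petersenVertex 0 2) (by decide) <|
  .cons (v := petersenVertex 1 3) (by decide) <|
  .cons (v := petersenVertex 2 4) (by decide) <|
  .cons (by decide) .nil

theorem petersenNineCycle_isCycle : petersenNineCycle.IsCycle := by
  rw [petersenNineCycle, Walk.cons_isCycle_iff]
  exact ⟨.mk' (by decide), by decide⟩

theorem mem_support_petersenNineCycle_iff (x : {s : Finset (Fin 5) // s.card = 2}) :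
    x ∈ petersenNineCycle.support ↔ x ≠ petersenVertex 3 4 := by
  revert x
  decide

theorem petersenGraph_not_isHamiltonianGraph : ¬ IsHamiltonianGraph petersenGraph :=
  not_isHamiltonianGraph_of_searchPathThrough (a := petersenVertex 0 1)
    (rem := [petersenVertex 0 2, petersenVertex 0 3, petersenVertex 0 4, petersenVertex 1 2,
      petersenVertex 1 3, petersenVertex 1 4, petersenVertex 2 3, petersenVertex 2 4,
      petersenVertex 3 4])
    (by decide) (by decide) (by decide)

theorem petersen_hypohamiltonian : Hypohamiltonian petersenGraph :=
  ⟨⟨petersenVertex 0 1⟩, petersenGraph_not_isHamiltonianGraph,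
    isHamiltonianGraph_induce_compl_singleton_of_forall_iso petersenGraph_exists_iso_apply_eq
      (petersenNineCycle_isCycle.isHamiltonianGraph_induce_compl_singleton
        mem_support_petersenNineCycle_iff)⟩
end

section
/- A hypohamiltonian graph contains no triangle through a vertex of degree 3; more precisely, if v has exactly three neighbors in a hypohamiltonian graph G, then no two neighbors of v are adjacent. -/
/-!
Let `v` have neighbours `a, b, c` with `a ~ b`. A Hamiltonian cycle of `G - a` passes through `v`
along two distinct edges, and the only neighbours of `v` left in `G - a` are `b` and `c`, so the
cycle uses the edge `vb`. Replacing that edge by the path `v a b` gives a Hamiltonian cycle of `G`.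
-/

namespace SimpleGraph

variable {V : Type*} {G : SimpleGraph V} {v : V}

lemma eq_or_eq_of_degree_eq_three [Fintype (G.neighborSet v)] (hdeg : G.degree v = 3)
    {a b x y : V} (hva : G.Adj v a) (hvb : G.Adj v b) (hvx : G.Adj v x) (hvy : G.Adj v y)
    (hxy : x ≠ y) (hxa : x ≠ a) (hya : y ≠ a) (hba : b ≠ a) : b = x ∨ b = y := by
  classical
  have hsub : ({a, x, y} : Finset V) ⊆ G.neighborFinset v := by
    simp [Finset.insert_subset_iff, hva, hvx, hvy]
  have hcard : ({a, x, y} : Finset V).card = 3 :=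
    Finset.card_eq_three.2 ⟨a, x, y, hxa.symm, hya.symm, hxy, rfl⟩
  have hN : ({a, x, y} : Finset V) = G.neighborFinset v :=
    Finset.eq_of_subset_of_card_le hsub (by rw [card_neighborFinset_eq_degree, hdeg, hcard])
  have hb : b ∈ G.neighborFinset v := (G.mem_neighborFinset v b).2 hvb
  simpa [← hN, hba] using hb

namespace Walk

variable [DecidableEq V]

lemma IsHamiltonianCycle.reverse {u : V} {p : G.Walk u u} (hp : p.IsHamiltonianCycle) :
    p.reverse.IsHamiltonianCycle := by
  have : Fintype V := @Fintype.ofFinite V hp.finite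
  rw [isHamiltonianCycle_iff_isCycle_and_length_eq] at hp ⊢
  exact ⟨hp.1.reverse, by rw [length_reverse, hp.2]⟩

lemma IsPath.isHamiltonianCycle_cons_cons {a x y : V} {p : G.Walk x y} (hp : p.IsPath)
    (hsupp : ∀ w, w ∈ p.support ↔ w ≠ a) (hxy : x ≠ y) (hya : G.Adj y a)
    (hax : G.Adj a x) :
    (cons hya (cons hax p)).IsHamiltonianCycle := by
  have ha : a ∉ p.support := fun h => (hsupp a).1 h rfl
  have hpath : (cons hax p).IsPath := (cons_isPath_iff hax p).2 ⟨hp, ha⟩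
  refine ⟨(cons_isCycle_iff _ hya).2 ⟨hpath, ?_⟩, ?_⟩
  · rw [edges_cons, List.mem_cons, Sym2.eq_iff]
    rintro ((⟨rfl, -⟩ | ⟨rfl, -⟩) | hmem)
    · exact hya.ne rfl
    · exact hxy rfl
    · exact ha (p.snd_mem_support_of_mem_edges hmem)
  · simp only [tail_cons]
    refine hpath.isHamiltonian_of_mem fun w => ?_
    by_cases hw : w = a
    · simp [hw]
    · simp [(hsupp w).2 hw]

end Walk

variable [DecidableEq V]

lemma isHamiltonianGraph_of_isHamiltonian_induce_compl {a : V} {x y : ({a}ᶜ : Set V)}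
    {p : (G.induce {a}ᶜ).Walk x y} (hp : p.IsHamiltonian) (hxy : x ≠ y) (hya : G.Adj y a)
    (hax : G.Adj a x) : IsHamiltonianGraph G := by
  let f := (Embedding.induce (G := G) {a}ᶜ).toHom
  have hsupp : ∀ w, w ∈ (p.map f).support ↔ w ≠ a := by
    intro w
    rw [Walk.support_map, List.mem_map]
    refine ⟨?_, fun hw => ⟨⟨w, hw⟩, hp.mem_support _, rfl⟩⟩
    rintro ⟨z, -, rfl⟩
    exact z.2
  have hpath : (p.map f).IsPath := hp.isPath.map Subtype.coe_injective
  exact ⟨y, _, hpath.isHamiltonianCycle_cons_cons hsupp (Subtype.coe_injective.ne hxy) hya hax⟩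

lemma isHamiltonianGraph_of_isHamiltonianCycle_induce_compl {a : V} {v : ({a}ᶜ : Set V)}
    {C : (G.induce {a}ᶜ).Walk v v} (hC : C.IsHamiltonianCycle) (hva : G.Adj v a)
    (hab : G.Adj a C.snd) : IsHamiltonianGraph G :=
  isHamiltonianGraph_of_isHamiltonian_induce_compl hC.isHamiltonian_tail
    (C.adj_snd hC.not_nil).ne.symm hva hab

end SimpleGraph

open SimpleGraph

theorem hypohamiltonian_no_triangle_at_cubic_vertex {V : Type*} [DecidableEq V] [Fintype V]
    (G : SimpleGraph V) [DecidableRel G.Adj] (h : Hypohamiltonian G)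
    (v : V) (hdeg : G.degree v = 3) :
    ∀ a b : V, G.Adj v a → G.Adj v b → ¬ G.Adj a b := by
  intro a b hva hvb hab
  obtain ⟨-, hG, hGa⟩ := h
  obtain ⟨u, C₀, hC₀⟩ := hGa a
  let v' : ({a}ᶜ : Set V) := ⟨v, Set.mem_compl_singleton_iff.2 hva.ne⟩
  let C := C₀.rotate v' (hC₀.mem_support v')
  have hC : C.IsHamiltonianCycle := hC₀.rotate _
  have hsnd : G.Adj v C.snd := induce_adj.1 (C.adj_snd hC.not_nil)
  have hpen : G.Adj v C.penultimate := (induce_adj.1 (C.adj_penultimate hC.not_nil)).symm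
  rcases eq_or_eq_of_degree_eq_three hdeg hva hvb hsnd hpen
    (Subtype.coe_injective.ne hC.snd_ne_penultimate) C.snd.2 C.penultimate.2 hab.ne.symm with
    hb | hb
  · exact hG (isHamiltonianGraph_of_isHamiltonianCycle_induce_compl hC hva (hb ▸ hab))
  · exact hG (isHamiltonianGraph_of_isHamiltonianCycle_induce_compl hC.reverse hva
      (by rwa [Walk.snd_reverse, ← hb]))
end
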